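/- For every v ∈ (0,1), the vector of electrical angles (Φ_1, Φ_2, Φ_3, Φ_4) = (−π, −π·(1−v), −π·(1−2v), π·v) is an ambiguous vector for the linear array r = (0,1,3,4): the 4×4 steering matrix A with entries A_{m,l} = exp(𝕚·r_m·Φ_l), r = (0,1,3,4), has determinant 0. -/

import Mathlib

/-!
If the phase factors `z l = exp (i Φ l)` satisfy `e₂(z) = 0`, the monic quartic `∏ (X - z l)`
involves only the monomials `1, X, X³, X⁴`, so its coefficients are a left null vector of the
steering matrix of the array `(0, 1, 3, 4)`. With `E = exp (i π v)` the phase factors here are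
`-1, -E, -E², E`, and their `e₂` vanishes identically.
-/

open Real Complex

noncomputable def steeringMatrix {M L : ℕ} (r : Fin M → ℝ) (Φ : Fin L → ℝ) :
    Matrix (Fin M) (Fin L) ℂ :=
  Matrix.of fun m l => exp (I * (r m : ℂ) * (Φ l : ℂ))

lemma steeringMatrix_natCast {M L : ℕ} (r : Fin M → ℕ) (Φ : Fin L → ℝ) :
    steeringMatrix (fun m => (r m : ℝ)) Φ = Matrix.of fun m l => exp (I * (Φ l : ℂ)) ^ r m := by
  ext m l
  rw [steeringMatrix, Matrix.of_apply, Matrix.of_apply, ofReal_natCast, ← Complex.exp_nat_mul]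
  ring_nf

lemma det_pow_zero_one_three_four_eq_zero {K : Type*} [Field K] (z : Fin 4 → K)
    (he₂ : z 0 * z 1 + z 0 * z 2 + z 0 * z 3 + z 1 * z 2 + z 1 * z 3 + z 2 * z 3 = 0) :
    (Matrix.of fun m l => z l ^ (![0, 1, 3, 4] : Fin 4 → ℕ) m).det = 0 := by
  refine Matrix.exists_vecMul_eq_zero_iff.mp ⟨![z 0 * z 1 * z 2 * z 3,
    -(z 0 * z 1 * z 2 + z 0 * z 1 * z 3 + z 0 * z 2 * z 3 + z 1 * z 2 * z 3),
    -(z 0 + z 1 + z 2 + z 3), 1], fun h => one_ne_zero (congrFun h 3), ?_⟩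
  ext l
  have hroot : (z l - z 0) * (z l - z 1) * (z l - z 2) * (z l - z 3) = 0 := by
    fin_cases l <;> simp
  simp only [Matrix.vecMul, dotProduct, Fin.sum_univ_four, Matrix.of_apply, Matrix.cons_val,
    pow_zero, pow_one, Pi.zero_apply]
  linear_combination hroot - z l ^ 2 * he₂

theorem ambiguity_0134_class_two_general (v : ℝ) :
    Matrix.det (Matrix.of fun m l : Fin 4 =>
      Complex.exp (Complex.I * ((![0, 1, 3, 4] m : ℝ) : ℂ) *
        (((![-π, -π * (1 - v), -π * (1 - 2 * v), π * v] : Fin 4 → ℝ) l : ℝ) : ℂ))) = 0 := by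
  set E := exp (I * (π * v : ℝ))
  have hpos : (![0, 1, 3, 4] : Fin 4 → ℝ) = fun m => ((![0, 1, 3, 4] : Fin 4 → ℕ) m : ℝ) := by
    ext m; fin_cases m <;> simp
  have h₀ : exp (I * (-π : ℝ)) = -1 := by
    rw [ofReal_neg, mul_neg, mul_comm, exp_neg_pi_mul_I]
  have h₁ : exp (I * (-π * (1 - v) : ℝ)) = -E := by
    rw [show I * ((-π * (1 - v) : ℝ) : ℂ) = I * (π * v : ℝ) - π * I by push_cast; ring,
      exp_sub_pi_mul_I]
  have h₂ : exp (I * (-π * (1 - 2 * v) : ℝ)) = -E ^ 2 := by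
    rw [show I * ((-π * (1 - 2 * v) : ℝ) : ℂ) = I * (π * v : ℝ) + I * (π * v : ℝ) - π * I by
      push_cast; ring, exp_sub_pi_mul_I, Complex.exp_add, sq]
  change (steeringMatrix ![0, 1, 3, 4] ![-π, -π * (1 - v), -π * (1 - 2 * v), π * v]).det = 0
  rw [hpos, steeringMatrix_natCast]
  apply det_pow_zero_one_three_four_eq_zero
  simp only [Matrix.cons_val, h₀, h₁, h₂]
  ring

/-- For every `v ∈ (0,1)` the vector of electrical angles
`(-π, -π(1-v), -π(1-2v), πv)` is an ambiguous vector for the linear array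
`r = (0,1,3,4)`: the steering matrix has determinant `0`. -/
theorem ambiguity_0134_class_two (v : ℝ) (hv0 : 0 < v) (hv1 : v < 1) :
    Matrix.det (Matrix.of fun m l : Fin 4 =>
      Complex.exp (Complex.I * ((![0, 1, 3, 4] m : ℝ) : ℂ) *
        (((![-π, -π * (1 - v), -π * (1 - 2 * v), π * v] : Fin 4 → ℝ) l : ℝ) : ℂ))) = 0 :=
  ambiguity_0134_class_two_general v
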